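/- Let μ ∈ ℂ^{n+1} with all μ_i ∉ ℤ and |μ| = Σμ_i = 0. Let Ω^k(μ) = {ω ∈ t^μℂ[t₀^{±1},...,t_n^{±1}] ⊗_{ℂ[t]} Ω̂^k : L_E(ω) = 0, i_E(ω) = 0} where Ω̂^k is the space of algebraic k-forms on ℂ^{n+1}, E is the Euler vector field, i_E is contraction and L_E the Lie derivative. Then the de Rham differential d maps Ω^k(μ) to Ω^{k+1}(μ), and the resulting complex 0 → Ω^0(μ) → Ω^1(μ) → ... → Ω^n(μ) → 0 is exact. -/

import Mathlib

/-! Twisted Laurent differential forms on `ℂ^m`.  A `k`-form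
`ω ∈ Ω̂^k(μ) = t^μ ℂ[t₀^{±1},…,t_{m-1}^{±1}] ⊗ Ω̂^k` is encoded by its coefficients with
respect to the basis `t^{μ+e} dt_S` (`S ⊆ {0,…,m-1}` with `|S| = k`, `e : Fin m → ℤ`),
i.e. as an element of `W m k := (({S // |S| = k}) × (Fin m → ℤ)) →₀ ℂ`.  The de Rham
differential `d`, the contraction `i_E` with the Euler field `E = ∑ tᵢ∂ᵢ`, and the Lie
derivative `L_E = d ∘ i_E + i_E ∘ d` (Cartan's formula) are given by their usual formulas. -/

def FormIdx (m k : ℕ) : Type := {S : Finset (Fin m) // S.card = k} × (Fin m → ℤ)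

abbrev W (m k : ℕ) : Type := FormIdx m k →₀ ℂ

def delta (m : ℕ) (j : Fin m) : Fin m → ℤ := fun i => if i = j then 1 else 0

/-- The sign `(-1)^{#{i ∈ S | i < j}}`. -/
noncomputable def sgn (m : ℕ) (j : Fin m) (S : Finset (Fin m)) : ℂ :=
  (-1) ^ (S.filter (fun i => i < j)).card

/-- Image of the basis form `t^{μ+e} dt_S` under the de Rham differential:
`d(t^{μ+e} dt_S) = ∑_{j ∉ S} (μ_j + e_j) (-1)^{#{i∈S | i<j}} t^{μ+e-δⱼ} dt_{S∪{j}}`. -/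
noncomputable def dImage (m k : ℕ) (μ : Fin m → ℂ) (p : FormIdx m k) : W m (k + 1) :=
  ∑ j ∈ p.1.1ᶜ.attach, (sgn m j.1 p.1.1 * (μ j.1 + (p.2 j.1 : ℂ))) •
    Finsupp.single
      (⟨⟨insert j.1 p.1.1, by
          rw [Finset.card_insert_of_notMem (Finset.mem_compl.mp j.2), p.1.2]⟩,
        p.2 - delta m j.1⟩) (1 : ℂ)

/-- The de Rham differential on twisted Laurent `k`-forms. -/
noncomputable def dop (m k : ℕ) (μ : Fin m → ℂ) : W m k →ₗ[ℂ] W m (k + 1) :=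
  Finsupp.lsum ℂ fun p => LinearMap.toSpanSingleton ℂ _ (dImage m k μ p)

/-- Image of the basis form `t^{μ+e} dt_S` under contraction with the Euler field:
`i_E(t^{μ+e} dt_S) = ∑_{j ∈ S} (-1)^{#{i∈S | i<j}} t^{μ+e+δⱼ} dt_{S∖{j}}`. -/
noncomputable def cImage (m k : ℕ) (p : FormIdx m (k + 1)) : W m k :=
  ∑ j ∈ p.1.1.attach, sgn m j.1 (p.1.1.erase j.1) •
    Finsupp.single
      (⟨⟨p.1.1.erase j.1, by simp [Finset.card_erase_of_mem j.2, p.1.2]⟩,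
        p.2 + delta m j.1⟩) (1 : ℂ)

/-- Contraction `i_E` with the Euler vector field. -/
noncomputable def iE (m k : ℕ) : W m (k + 1) →ₗ[ℂ] W m k :=
  Finsupp.lsum ℂ fun p => LinearMap.toSpanSingleton ℂ _ (cImage m k p)

/-- The Lie derivative `L_E` along the Euler field, via Cartan's formula
`L_E = d ∘ i_E + i_E ∘ d`. -/
noncomputable def LieE (m : ℕ) (μ : Fin m → ℂ) : (k : ℕ) → W m k →ₗ[ℂ] W m k
  | 0 => iE m 0 ∘ₗ dop m 0 μ
  | (k + 1) => dop m k μ ∘ₗ iE m k + iE m (k + 1) ∘ₗ dop m (k + 1) μ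

/-- Membership in `Ω^k(μ) = {ω : L_E ω = |μ| ω = 0, i_E ω = 0}` (for `|μ| = 0`). -/
def OmegaCond (m : ℕ) (μ : Fin m → ℂ) : (k : ℕ) → W m k → Prop
  | 0, ω => LieE m μ 0 ω = 0
  | (k + 1), ω => LieE m μ (k + 1) ω = 0 ∧ iE m k ω = 0

/-! Formal integration in `t₀` is a contracting homotopy `H` of the twisted Laurent de Rham
complex: `dH + Hd = id`, because `H` only divides by the exponents `μ₀ + e₀ + 1`, which never
vanish as `μ₀ ∉ ℤ`. Up to these scalars `H` is the contraction with `t₀∂₀`, so it anticommutes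
with `i_E` and preserves `ker i_E`. By Cartan's formula `Ω^k(μ) = ker i_E ∩ ker (i_E d)`, hence a
closed `ω ∈ Ω^{k+1}(μ)` equals `d(Hω)` with `Hω ∈ Ω^k(μ)`. In the top degree `N+1` closedness is
automatic: `i_E dω = L_E ω - d i_E ω = 0`, and `i_E` is injective on forms of degree `N+2`. -/

theorem Finset.sum_sum_erase_eq_zero_of_antisymm {ι M : Type*} [DecidableEq ι] [AddCommGroup M]
    (s : Finset ι) (F : ι → ι → M) (hF : ∀ j ∈ s, ∀ l ∈ s, j ≠ l → F j l = -F l j) :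
    ∑ j ∈ s, ∑ l ∈ s.erase j, F j l = 0 := by
  rw [← Finset.sum_finset_product' s.offDiag s (fun j => s.erase j)
    (fun p => by rw [Finset.mem_offDiag, Finset.mem_erase]; tauto)]
  refine Finset.sum_involution (fun p _ => p.swap) (fun p hp => ?_) (fun p hp _ => ?_)
    (fun p hp => Finset.mem_offDiag.mpr ?_) (fun p _ => p.swap_swap)
  · obtain ⟨hj, hl, hjl⟩ := Finset.mem_offDiag.mp hp
    rw [hF _ hj _ hl hjl]
    exact neg_add_cancel _
  · exact fun h => (Finset.mem_offDiag.mp hp).2.2 (congrArg Prod.fst h).symm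
  · obtain ⟨hj, hl, hjl⟩ := Finset.mem_offDiag.mp hp
    exact ⟨hl, hj, hjl.symm⟩

namespace TwistedDeRham

open Finset

section Basis

variable {m : ℕ}

variable (m) in
/-- The basis form `t^{μ+e} dt_S` of degree `k`, read as `0` when `#S ≠ k`. -/
noncomputable def basisForm (k : ℕ) (S : Finset (Fin m)) (e : Fin m → ℤ) : W m k :=
  if h : S.card = k then Finsupp.single (α := FormIdx m k) ⟨⟨S, h⟩, e⟩ 1 else 0

theorem basisForm_of_card_eq {k : ℕ} {S : Finset (Fin m)} (hS : S.card = k) (e : Fin m → ℤ) :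
    basisForm m k S e = Finsupp.single (α := FormIdx m k) ⟨⟨S, hS⟩, e⟩ 1 :=
  dif_pos hS

theorem hom_ext_basisForm {k k' : ℕ} {φ ψ : W m k →ₗ[ℂ] W m k'}
    (h : ∀ S, S.card = k → ∀ e, φ (basisForm m k S e) = ψ (basisForm m k S e)) : φ = ψ := by
  refine Finsupp.lhom_ext' fun ⟨⟨S, hS⟩, e⟩ => LinearMap.ext_ring ?_
  have hSe := h S hS e
  rwa [basisForm_of_card_eq hS] at hSe

theorem dop_basisForm (μ : Fin m → ℂ) {k : ℕ} {S : Finset (Fin m)} (hS : S.card = k)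
    (e : Fin m → ℤ) :
    dop m k μ (basisForm m k S e) =
      ∑ j ∈ Sᶜ, (sgn m j S * (μ j + e j)) • basisForm m (k + 1) (insert j S) (e - delta m j) := by
  rw [basisForm_of_card_eq hS, dop]
  refine (Finsupp.lsum_single ℂ _ _ _).trans ?_
  rw [LinearMap.toSpanSingleton_apply, one_smul]
  unfold dImage
  rw [← sum_attach Sᶜ]
  exact sum_congr rfl fun j _ => by rw [basisForm_of_card_eq]

theorem iE_basisForm {k : ℕ} {S : Finset (Fin m)} (hS : S.card = k + 1) (e : Fin m → ℤ) :
    iE m k (basisForm m (k + 1) S e) =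
      ∑ j ∈ S, sgn m j (S.erase j) • basisForm m k (S.erase j) (e + delta m j) := by
  rw [basisForm_of_card_eq hS, iE]
  refine (Finsupp.lsum_single ℂ _ _ _).trans ?_
  rw [LinearMap.toSpanSingleton_apply, one_smul]
  unfold cImage
  rw [← sum_attach S]
  exact sum_congr rfl fun j _ => by rw [basisForm_of_card_eq]

theorem delta_self (j : Fin m) : delta m j j = 1 := if_pos rfl

theorem delta_of_ne {i j : Fin m} (h : i ≠ j) : delta m j i = 0 := if_neg h

end Basis

section Sign

variable {m : ℕ} {S : Finset (Fin m)}

theorem sgn_insert_of_lt {a b : Fin m} (hab : a < b) (ha : a ∉ S) :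
    sgn m b (insert a S) = -sgn m b S := by
  rw [sgn, sgn, filter_insert, if_pos hab,
    card_insert_of_notMem fun h => ha (mem_filter.mp h).1, pow_succ, mul_neg_one]

theorem sgn_insert_of_gt {a b : Fin m} (hab : a < b) : sgn m a (insert b S) = sgn m a S := by
  rw [sgn, sgn, filter_insert, if_neg hab.not_gt]

theorem sgn_swap {j l : Fin m} (hjl : j ≠ l) (hj : j ∉ S) (hl : l ∉ S) :
    sgn m l (insert j S) * sgn m j S = -(sgn m j (insert l S) * sgn m l S) := by
  rcases hjl.lt_or_gt with h | h
  · rw [sgn_insert_of_lt h hj, sgn_insert_of_gt h, neg_mul, mul_comm]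
  · rw [sgn_insert_of_lt h hl, sgn_insert_of_gt h, neg_mul, neg_neg, mul_comm]

variable [NeZero m]

theorem sgn_zero_left (S : Finset (Fin m)) : sgn m 0 S = 1 := by
  rw [sgn, filter_false_of_mem fun i _ => (Fin.zero_le i).not_gt, card_empty, pow_zero]

theorem sgn_erase_zero {j : Fin m} (hj : j ≠ 0) (h0 : 0 ∈ S) :
    sgn m j (S.erase 0) = -sgn m j S := by
  conv_rhs => rw [← insert_erase h0]
  rw [sgn_insert_of_lt (Fin.pos_iff_ne_zero.mpr hj) (notMem_erase 0 S), neg_neg]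

end Sign

section Differential

variable {m : ℕ}

theorem dop_comp_dop (μ : Fin m → ℂ) (k : ℕ) : dop m (k + 1) μ ∘ₗ dop m k μ = 0 := by
  refine hom_ext_basisForm fun S hS e => ?_
  have hdd : ∀ j ∈ Sᶜ, dop m (k + 1) μ (basisForm m (k + 1) (insert j S) (e - delta m j)) =
      ∑ l ∈ Sᶜ.erase j, (sgn m l (insert j S) * (μ l + e l)) •
        basisForm m (k + 2) (insert l (insert j S)) (e - delta m j - delta m l) := by
    intro j hj
    rw [dop_basisForm μ (by rw [card_insert_of_notMem (mem_compl.mp hj), hS]), compl_insert]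
    refine sum_congr rfl fun l hl => ?_
    rw [Pi.sub_apply, delta_of_ne (ne_of_mem_erase hl), sub_zero]
  rw [LinearMap.comp_apply, LinearMap.zero_apply, dop_basisForm μ hS, map_sum]
  simp_rw [map_smul]
  rw [sum_congr rfl fun j hj => by rw [hdd j hj, smul_sum]]
  refine sum_sum_erase_eq_zero_of_antisymm _ _ fun j hj l hl hjl => ?_
  rw [smul_smul, smul_smul, insert_comm, sub_right_comm, ← neg_smul]
  congr 1
  linear_combination ((μ j + e j) * (μ l + e l)) *
    sgn_swap hjl (mem_compl.mp hj) (mem_compl.mp hl)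

end Differential

section Homotopy

theorem add_intCast_ne_zero {R : Type*} [Ring R] {a : R} (ha : ∀ z : ℤ, a ≠ z) (z : ℤ) :
    a + z ≠ 0 := fun h => ha (-z) (by rw [Int.cast_neg]; exact eq_neg_of_add_eq_zero_left h)

variable {m : ℕ} [NeZero m]

variable (m) in
/-- Formal integration in `t₀` of the `dt₀`-component of a form. -/
noncomputable def homotopy (μ : Fin m → ℂ) (k : ℕ) : W m (k + 1) →ₗ[ℂ] W m k :=
  Finsupp.linearCombination ℂ fun p =>
    if (0 : Fin m) ∈ p.1.1 then
      (μ 0 + p.2 0 + 1)⁻¹ • basisForm m k (p.1.1.erase 0) (p.2 + delta m 0)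
    else 0

theorem homotopy_basisForm_of_zero_mem (μ : Fin m → ℂ) {k : ℕ} {S : Finset (Fin m)}
    (hS : S.card = k + 1) (h0 : 0 ∈ S) (e : Fin m → ℤ) :
    homotopy m μ k (basisForm m (k + 1) S e) =
      (μ 0 + e 0 + 1)⁻¹ • basisForm m k (S.erase 0) (e + delta m 0) := by
  rw [basisForm_of_card_eq hS, homotopy]
  refine (Finsupp.linearCombination_single ℂ _ _).trans ?_
  rw [one_smul]
  exact if_pos h0

theorem homotopy_basisForm_of_zero_notMem (μ : Fin m → ℂ) {k : ℕ} {S : Finset (Fin m)}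
    (h0 : 0 ∉ S) (e : Fin m → ℤ) : homotopy m μ k (basisForm m (k + 1) S e) = 0 := by
  by_cases hS : S.card = k + 1
  · rw [basisForm_of_card_eq hS, homotopy]
    refine (Finsupp.linearCombination_single ℂ _ _).trans ?_
    rw [one_smul]
    exact if_neg h0
  · rw [basisForm, dif_neg hS, map_zero]

theorem homotopy_dop_basisForm_of_zero_notMem {μ : Fin m → ℂ} (hμ₀ : ∀ z : ℤ, μ 0 ≠ z)
    {k : ℕ} {S : Finset (Fin m)} (hS : S.card = k) (h0 : 0 ∉ S) (e : Fin m → ℤ) :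
    homotopy m μ k (dop m k μ (basisForm m k S e)) = basisForm m k S e := by
  rw [dop_basisForm μ hS, map_sum, sum_eq_single_of_mem 0 (mem_compl.mpr h0) fun j _ hj => ?_]
  · rw [map_smul, homotopy_basisForm_of_zero_mem μ (by rw [card_insert_of_notMem h0, hS])
      (mem_insert_self 0 S), erase_insert h0, sub_add_cancel, sgn_zero_left, one_mul, smul_smul,
      Pi.sub_apply, delta_self, Int.cast_sub, Int.cast_one, add_assoc, sub_add_cancel,
      mul_inv_cancel₀ (add_intCast_ne_zero hμ₀ (e 0)), one_smul]
  · rw [map_smul, homotopy_basisForm_of_zero_notMem μ (by simp [h0, Ne.symm hj]), smul_zero]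

theorem dop_homotopy_add_homotopy_dop_basisForm_of_zero_mem {μ : Fin m → ℂ}
    (hμ₀ : ∀ z : ℤ, μ 0 ≠ z) {k : ℕ} {S : Finset (Fin m)} (hS : S.card = k + 1) (h0 : 0 ∈ S)
    (e : Fin m → ℤ) :
    dop m k μ (homotopy m μ k (basisForm m (k + 1) S e)) +
      homotopy m μ (k + 1) (dop m (k + 1) μ (basisForm m (k + 1) S e)) =
      basisForm m (k + 1) S e := by
  -- the `j = 0` term of `d(Hω)` gives back `ω`; its other terms cancel those of `H(dω)`
  set c := μ 0 + e 0 + 1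
  set T := ∑ j ∈ Sᶜ, (c⁻¹ * (sgn m j S * (μ j + e j))) •
    basisForm m (k + 1) (insert j (S.erase 0)) (e + delta m 0 - delta m j)
  have hc : c ≠ 0 := by
    simpa [c, add_assoc] using add_intCast_ne_zero hμ₀ (e 0 + 1)
  have hdh : dop m k μ (homotopy m μ k (basisForm m (k + 1) S e)) =
      basisForm m (k + 1) S e - T := by
    rw [homotopy_basisForm_of_zero_mem μ hS h0, map_smul,
      dop_basisForm μ (by rw [card_erase_of_mem h0, hS, Nat.add_sub_cancel]), compl_erase,
      sum_insert (notMem_compl.mpr h0), smul_add, sgn_zero_left, one_mul, insert_erase h0,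
      add_sub_cancel_right, Pi.add_apply, delta_self, Int.cast_add, Int.cast_one, ← add_assoc,
      smul_smul, inv_mul_cancel₀ hc, one_smul, sub_eq_add_neg, smul_sum, ← sum_neg_distrib]
    refine congrArg _ (sum_congr rfl fun j hj => ?_)
    have hj0 : j ≠ 0 := fun h => mem_compl.mp hj (h ▸ h0)
    rw [sgn_erase_zero hj0 h0, Pi.add_apply, delta_of_ne hj0, add_zero, smul_smul, ← neg_smul,
      neg_mul, mul_neg]
  have hhd : homotopy m μ (k + 1) (dop m (k + 1) μ (basisForm m (k + 1) S e)) = T := by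
    rw [dop_basisForm μ hS, map_sum]
    refine sum_congr rfl fun j hj => ?_
    have hjS : j ∉ S := mem_compl.mp hj
    have hj0 : j ≠ 0 := fun h => hjS (h ▸ h0)
    rw [map_smul, homotopy_basisForm_of_zero_mem μ (by rw [card_insert_of_notMem hjS, hS])
      (mem_insert_of_mem h0), erase_insert_of_ne hj0, Pi.sub_apply, delta_of_ne hj0.symm,
      sub_zero, sub_add_eq_add_sub, smul_smul, mul_comm]
  rw [hdh, hhd, sub_add_cancel]

theorem dop_comp_homotopy_add_homotopy_comp_dop {μ : Fin m → ℂ} (hμ₀ : ∀ z : ℤ, μ 0 ≠ z)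
    (k : ℕ) : dop m k μ ∘ₗ homotopy m μ k + homotopy m μ (k + 1) ∘ₗ dop m (k + 1) μ =
      LinearMap.id := by
  refine hom_ext_basisForm fun S hS e => ?_
  rw [LinearMap.add_apply, LinearMap.comp_apply, LinearMap.comp_apply, LinearMap.id_apply]
  by_cases h0 : 0 ∈ S
  · exact dop_homotopy_add_homotopy_dop_basisForm_of_zero_mem hμ₀ hS h0 e
  · rw [homotopy_basisForm_of_zero_notMem μ h0, map_zero, zero_add,
      homotopy_dop_basisForm_of_zero_notMem hμ₀ hS h0]

theorem homotopy_comp_dop_zero {μ : Fin m → ℂ} (hμ₀ : ∀ z : ℤ, μ 0 ≠ z) :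
    homotopy m μ 0 ∘ₗ dop m 0 μ = LinearMap.id :=
  hom_ext_basisForm fun S hS e => homotopy_dop_basisForm_of_zero_notMem hμ₀ hS
    (by simp [card_eq_zero.mp hS]) e

theorem iE_comp_homotopy_add_homotopy_comp_iE (μ : Fin m → ℂ) (k : ℕ) :
    iE m k ∘ₗ homotopy m μ (k + 1) + homotopy m μ k ∘ₗ iE m (k + 1) = 0 := by
  refine hom_ext_basisForm fun S hS e => ?_
  rw [LinearMap.add_apply, LinearMap.comp_apply, LinearMap.comp_apply, LinearMap.zero_apply,
    iE_basisForm hS, map_sum]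
  by_cases h0 : 0 ∈ S
  · rw [homotopy_basisForm_of_zero_mem μ hS h0, map_smul,
      iE_basisForm (by rw [card_erase_of_mem h0, hS, Nat.add_sub_cancel]), ← sum_erase_add S _ h0,
      map_smul, homotopy_basisForm_of_zero_notMem μ (notMem_erase 0 S), smul_zero, add_zero,
      smul_sum, ← sum_add_distrib]
    refine sum_eq_zero fun j hj => ?_
    have hj0 : j ≠ 0 := ne_of_mem_erase hj
    have h0j : 0 ∈ S.erase j := mem_erase_of_ne_of_mem hj0.symm h0
    rw [map_smul, homotopy_basisForm_of_zero_mem μ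
        (by rw [card_erase_of_mem (mem_of_mem_erase hj), hS, Nat.add_sub_cancel]) h0j,
      Pi.add_apply, delta_of_ne hj0.symm, add_zero, erase_right_comm, sgn_erase_zero hj0 h0j,
      add_right_comm e]
    module
  · rw [homotopy_basisForm_of_zero_notMem μ h0, map_zero, zero_add]
    exact sum_eq_zero fun j _ => by
      rw [map_smul, homotopy_basisForm_of_zero_notMem μ fun h => h0 (mem_of_mem_erase h),
        smul_zero]

end Homotopy

section TopDegree

variable {m : ℕ} [NeZero m]

variable (m) in
/-- Wedge product with `dt₀ / t₀`. -/
noncomputable def dlogT0Wedge (k : ℕ) : W m k →ₗ[ℂ] W m (k + 1) :=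
  Finsupp.linearCombination ℂ fun p =>
    if (0 : Fin m) ∈ p.1.1 then 0 else basisForm m (k + 1) (insert 0 p.1.1) (p.2 - delta m 0)

theorem dlogT0Wedge_basisForm_of_zero_mem {k : ℕ} {S : Finset (Fin m)} (h0 : 0 ∈ S)
    (e : Fin m → ℤ) : dlogT0Wedge m k (basisForm m k S e) = 0 := by
  by_cases hS : S.card = k
  · rw [basisForm_of_card_eq hS, dlogT0Wedge]
    refine (Finsupp.linearCombination_single ℂ _ _).trans ?_
    rw [one_smul]
    exact if_pos h0
  · rw [basisForm, dif_neg hS, map_zero]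

theorem dlogT0Wedge_basisForm_of_zero_notMem {k : ℕ} {S : Finset (Fin m)} (hS : S.card = k)
    (h0 : 0 ∉ S) (e : Fin m → ℤ) :
    dlogT0Wedge m k (basisForm m k S e) = basisForm m (k + 1) (insert 0 S) (e - delta m 0) := by
  rw [basisForm_of_card_eq hS, dlogT0Wedge]
  refine (Finsupp.linearCombination_single ℂ _ _).trans ?_
  rw [one_smul]
  exact if_neg h0

theorem dlogT0Wedge_iE_basisForm_of_zero_mem {k : ℕ} {S : Finset (Fin m)} (hS : S.card = k + 1)
    (h0 : 0 ∈ S) (e : Fin m → ℤ) :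
    dlogT0Wedge m k (iE m k (basisForm m (k + 1) S e)) = basisForm m (k + 1) S e := by
  rw [iE_basisForm hS, map_sum, sum_eq_single_of_mem 0 h0 fun j _ hj0 => ?_]
  · rw [map_smul, dlogT0Wedge_basisForm_of_zero_notMem
      (by rw [card_erase_of_mem h0, hS, Nat.add_sub_cancel]) (notMem_erase 0 S),
      sgn_zero_left, one_smul, insert_erase h0, add_sub_cancel_right]
  · rw [map_smul, dlogT0Wedge_basisForm_of_zero_mem (mem_erase_of_ne_of_mem hj0.symm h0),
      smul_zero]

theorem iE_injective_top (M : ℕ) : Function.Injective (iE (M + 1) M) := by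
  have hleft : dlogT0Wedge (M + 1) M ∘ₗ iE (M + 1) M = LinearMap.id :=
    hom_ext_basisForm fun S hS e => dlogT0Wedge_iE_basisForm_of_zero_mem hS
      (eq_univ_of_card S (by rw [hS, Fintype.card_fin]) ▸ mem_univ 0) e
  exact Function.LeftInverse.injective (g := dlogT0Wedge (M + 1) M) (LinearMap.congr_fun hleft)

end TopDegree

section Complex

variable {m : ℕ} {μ : Fin m → ℂ}

theorem omegaCond_zero_iff {ω : W m 0} : OmegaCond m μ 0 ω ↔ iE m 0 (dop m 0 μ ω) = 0 :=
  Iff.rfl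

theorem omegaCond_succ_iff {k : ℕ} {ω : W m (k + 1)} :
    OmegaCond m μ (k + 1) ω ↔ iE m k ω = 0 ∧ iE m (k + 1) (dop m (k + 1) μ ω) = 0 := by
  simp only [OmegaCond, LieE, LinearMap.add_apply, LinearMap.comp_apply]
  constructor
  · rintro ⟨hL, hi⟩
    rw [hi, map_zero, zero_add] at hL
    exact ⟨hi, hL⟩
  · rintro ⟨hi, hL⟩
    rw [hi, map_zero, zero_add]
    exact ⟨hL, rfl⟩

theorem _root_.OmegaCond.iE_dop {k : ℕ} {ω : W m k} (h : OmegaCond m μ k ω) :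
    iE m k (dop m k μ ω) = 0 := by
  cases k with
  | zero => exact omegaCond_zero_iff.mp h
  | succ k => exact (omegaCond_succ_iff.mp h).2

theorem _root_.OmegaCond.map_dop {k : ℕ} {ω : W m k} (h : OmegaCond m μ k ω) :
    OmegaCond m μ (k + 1) (dop m k μ ω) := by
  refine omegaCond_succ_iff.mpr ⟨h.iE_dop, ?_⟩
  rw [← LinearMap.comp_apply (dop m (k + 1) μ), dop_comp_dop, LinearMap.zero_apply, map_zero]

theorem _root_.OmegaCond.exists_dop_eq [NeZero m] (hμ₀ : ∀ z : ℤ, μ 0 ≠ z) {k : ℕ}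
    {ω : W m (k + 1)} (hω : OmegaCond m μ (k + 1) ω) (hd : dop m (k + 1) μ ω = 0) :
    ∃ η, OmegaCond m μ k η ∧ dop m k μ η = ω := by
  have hdh : dop m k μ (homotopy m μ k ω) = ω := by
    simpa [hd] using LinearMap.congr_fun (dop_comp_homotopy_add_homotopy_comp_dop hμ₀ k) ω
  have hi : iE m k ω = 0 := (omegaCond_succ_iff.mp hω).1
  refine ⟨homotopy m μ k ω, ?_, hdh⟩
  cases k with
  | zero => rwa [omegaCond_zero_iff, hdh]
  | succ k =>
    refine omegaCond_succ_iff.mpr ⟨?_, by rwa [hdh]⟩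
    simpa [hi] using LinearMap.congr_fun (iE_comp_homotopy_add_homotopy_comp_iE μ k) ω

end Complex

end TwistedDeRham

theorem twisted_deRham_exact_general
    (N : ℕ) (μ : Fin (N + 2) → ℂ)
    (hμ : ∀ i, ∀ z : ℤ, μ i ≠ z) :
    -- d preserves the conditions L_E = 0, i_E = 0
    (∀ (k : ℕ) (ω : W (N + 2) k), OmegaCond (N + 2) μ k ω →
      OmegaCond (N + 2) μ (k + 1) (dop (N + 2) k μ ω)) ∧
    -- exactness at Ω⁰ : d is injective there
    (∀ ω : W (N + 2) 0, OmegaCond (N + 2) μ 0 ω → dop (N + 2) 0 μ ω = 0 → ω = 0) ∧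
    -- exactness at Ω^k for 1 ≤ k ≤ N
    (∀ k : ℕ, k + 1 ≤ N → ∀ ω : W (N + 2) (k + 1), OmegaCond (N + 2) μ (k + 1) ω →
      dop (N + 2) (k + 1) μ ω = 0 →
      ∃ η : W (N + 2) k, OmegaCond (N + 2) μ k η ∧ dop (N + 2) k μ η = ω) ∧
    -- exactness at the top degree Ω^{N+1} : d is surjective onto it
    (∀ ω : W (N + 2) (N + 1), OmegaCond (N + 2) μ (N + 1) ω →
      ∃ η : W (N + 2) N, OmegaCond (N + 2) μ N η ∧ dop (N + 2) N μ η = ω) := by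
  refine ⟨fun k ω hω => hω.map_dop, fun ω _ hd => ?_,
    fun k _ ω hω hd => hω.exists_dop_eq (hμ 0) hd, fun ω hω => hω.exists_dop_eq (hμ 0) ?_⟩
  · simpa [hd] using (LinearMap.congr_fun (TwistedDeRham.homotopy_comp_dop_zero (hμ 0)) ω).symm
  · exact TwistedDeRham.iE_injective_top (N + 1) (by rw [map_zero]; exact hω.iE_dop)

/-- For `μ ∈ ℂ^{N+2}` with all `μ_i ∉ ℤ` and `|μ| = 0`, the de Rham
differential maps `Ω^k(μ)` to `Ω^{k+1}(μ)` and the complex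
`0 → Ω^0(μ) → Ω^1(μ) → ⋯ → Ω^{N+1}(μ) → 0` is exact (here the ambient space is `ℂ^{N+2}`,
so the top degree is `N+1`). -/
theorem twisted_deRham_exact
    (N : ℕ) (μ : Fin (N + 2) → ℂ)
    (hμ : ∀ i, ∀ z : ℤ, μ i ≠ z) (hsum : ∑ i, μ i = 0) :
    -- d preserves the conditions L_E = 0, i_E = 0
    (∀ (k : ℕ) (ω : W (N + 2) k), OmegaCond (N + 2) μ k ω →
      OmegaCond (N + 2) μ (k + 1) (dop (N + 2) k μ ω)) ∧
    -- exactness at Ω⁰ : d is injective there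
    (∀ ω : W (N + 2) 0, OmegaCond (N + 2) μ 0 ω → dop (N + 2) 0 μ ω = 0 → ω = 0) ∧
    -- exactness at Ω^k for 1 ≤ k ≤ N
    (∀ k : ℕ, k + 1 ≤ N → ∀ ω : W (N + 2) (k + 1), OmegaCond (N + 2) μ (k + 1) ω →
      dop (N + 2) (k + 1) μ ω = 0 →
      ∃ η : W (N + 2) k, OmegaCond (N + 2) μ k η ∧ dop (N + 2) k μ η = ω) ∧
    -- exactness at the top degree Ω^{N+1} : d is surjective onto it
    (∀ ω : W (N + 2) (N + 1), OmegaCond (N + 2) μ (N + 1) ω →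
      ∃ η : W (N + 2) N, OmegaCond (N + 2) μ N η ∧ dop (N + 2) N μ η = ω) :=
  twisted_deRham_exact_general N μ hμ
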